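/- For sequences S, R : ℕ → ℕ (finitely supported), define the coefficient c(S,R) = ∏_{n ≥ 1} binom(⌊∑_{i=0}^{n-1} 2^{i-n}(s_i - r_i)⌋, r_n) if r_0 = 0, and c(S,R) = 0 if r_0 > 0, where binom(m,n) = 0 when m < n (interpreting the floor of the dyadic sum appropriately). Then c(S,R) ≠ 0 implies r_0 = 0 and, for every n ≥ 1, ∑_{i=0}^{n-1} 2^i s_i ≥ ∑_{i=1}^{n} 2^i r_i. -/

import Mathlib

/-- Binomial coefficient with an integer top, zero when the top is smaller than the bottom
(in particular when it is negative). -/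
def intBinom (m : ℤ) (k : ℕ) : ℕ := if m < (k : ℤ) then 0 else m.toNat.choose k

/-- The coefficient `c(S,R)` of Theorem 3.3, with the product over `1 ≤ n ≤ N`,
where `N` bounds the supports of `S` and `R`.  The floor of the dyadic sum
`∑_{i=0}^{n-1} 2^{i-n}(s_i - r_i)` is computed as a floor division in `ℤ`. -/
def milnorC (S R : ℕ → ℕ) (N : ℕ) : ℕ :=
  if R 0 ≠ 0 then 0
  else ∏ n ∈ Finset.Icc 1 N,
    intBinom ((∑ i ∈ Finset.range n, 2 ^ i * ((S i : ℤ) - (R i : ℤ))).fdiv (2 ^ n)) (R n)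

theorem stmt_2 (S R : ℕ → ℕ) (N : ℕ)
    (hS : ∀ n, N ≤ n → S n = 0) (hR : ∀ n, N ≤ n → R n = 0)
    (hc : milnorC S R N ≠ 0) :
    R 0 = 0 ∧ ∀ n : ℕ, 1 ≤ n →
      ∑ i ∈ Finset.Icc 1 n, 2 ^ i * R i ≤ ∑ i ∈ Finset.range n, 2 ^ i * S i := by
  have hR0 : R 0 = 0 := by
    by_contra h
    simp [milnorC, h] at hc
  refine ⟨hR0, ?_⟩
  have hprod : ∀ n ∈ Finset.Icc 1 N,
      intBinom ((∑ i ∈ Finset.range n, 2 ^ i * ((S i : ℤ) - (R i : ℤ))).fdiv (2 ^ n)) (R n) ≠ 0 := by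
    rw [milnorC, if_neg (by simpa using hR0)] at hc
    exact Finset.prod_ne_zero_iff.mp hc
  -- key inequality on ℤ for n in [1,N]
  have hT : ∀ n ∈ Finset.Icc 1 N,
      (2:ℤ) ^ n * R n ≤ ∑ i ∈ Finset.range n, 2 ^ i * ((S i : ℤ) - (R i : ℤ)) := by
    intro n hn
    have h := hprod n hn
    unfold intBinom at h
    have hle : (R n : ℤ) ≤ (∑ i ∈ Finset.range n, 2 ^ i * ((S i : ℤ) - (R i : ℤ))).fdiv (2 ^ n) := by
      by_contra hlt
      push_neg at hlt
      simp [if_pos hlt] at h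
    rw [Int.fdiv_eq_ediv_of_nonneg _ (by positivity)] at hle
    have := (Int.le_ediv_iff_mul_le (by positivity : (0:ℤ) < 2 ^ n)).mp hle
    linarith
  -- key for n in [1,N] as ℕ statement
  have key : ∀ n ∈ Finset.Icc 1 N,
      ∑ i ∈ Finset.Icc 1 n, 2 ^ i * R i ≤ ∑ i ∈ Finset.range n, 2 ^ i * S i := by
    intro n hn
    have h := hT n hn
    have hsplit : (∑ i ∈ Finset.Icc 1 n, (2:ℤ) ^ i * R i)
        = (∑ i ∈ Finset.range n, (2:ℤ) ^ i * R i) + 2 ^ n * R n := by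
      have h1 : Finset.Icc 1 n = Finset.range (n+1) \ {0} := by
        ext i; simp [Finset.mem_Icc, Finset.mem_range, Nat.lt_succ_iff, Nat.one_le_iff_ne_zero]
        tauto
      rw [h1, Finset.sum_sdiff_eq_sub (by simp), Finset.sum_range_succ]
      simp [hR0]
    have hcast : ((∑ i ∈ Finset.Icc 1 n, 2 ^ i * R i : ℕ) : ℤ)
        ≤ ((∑ i ∈ Finset.range n, 2 ^ i * S i : ℕ) : ℤ) := by
      push_cast
      rw [hsplit]
      have : ∑ i ∈ Finset.range n, (2:ℤ) ^ i * ((S i : ℤ) - (R i : ℤ))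
          = ∑ i ∈ Finset.range n, (2:ℤ) ^ i * S i - ∑ i ∈ Finset.range n, (2:ℤ) ^ i * R i := by
        rw [← Finset.sum_sub_distrib]; congr 1; ext i; ring
      linarith [h, this ▸ h]
    exact_mod_cast hcast
  intro n hn
  rcases le_or_gt n N with h | h
  · exact key n (Finset.mem_Icc.mpr ⟨hn, h⟩)
  · rcases Nat.eq_zero_or_pos N with hN | hN
    · have : ∑ i ∈ Finset.Icc 1 n, 2 ^ i * R i = 0 := by
        apply Finset.sum_eq_zero
        intro i hi
        simp [hR i (by omega)]
      omega
    · have e1 : ∑ i ∈ Finset.Icc 1 n, 2 ^ i * R i = ∑ i ∈ Finset.Icc 1 N, 2 ^ i * R i := by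
        rw [eq_comm]
        apply Finset.sum_subset
        · intro i hi; simp_all [Finset.mem_Icc]; omega
        · intro i hm hi; simp [Finset.mem_Icc] at hi hm
          simp [hR i (by omega)]
      have e2 : ∑ i ∈ Finset.range N, 2 ^ i * S i ≤ ∑ i ∈ Finset.range n, 2 ^ i * S i := by
        apply Finset.sum_le_sum_of_subset
        exact Finset.range_subset_range.mpr (by omega)
      calc ∑ i ∈ Finset.Icc 1 n, 2 ^ i * R i = ∑ i ∈ Finset.Icc 1 N, 2 ^ i * R i := e1
        _ ≤ ∑ i ∈ Finset.range N, 2 ^ i * S i := key N (Finset.mem_Icc.mpr ⟨hN, le_refl N⟩)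
        _ ≤ _ := e2
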